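/- (Main a priori error estimate, discrete form.) Let Z = [ζ_1,…,ζ_R] ∈ ℝ^{N×R} have orthonormal columns, w, ŵ ∈ ℝ^N nonnegative vectors with ∑ w_i = |Ω| and ∑ ŵ_i ≤ |Ω|, and suppose: (i) |⟨w − ŵ, ζ_n⟩| ≤ ε₁ for n = 1,…,R; (ii) the snapshot φ ∈ ℝ^N satisfies ‖φ − Z Zᵀ φ‖₂ ≤ σ (SVD truncation bound); (iii) ∑_{n=1}^R |⟨φ, ζ_n⟩| ≤ S_f. Then |⟨w, φ⟩ − ⟨ŵ, φ⟩| ≤ (‖w‖₂ + ‖ŵ‖₂) σ + ε₁ S_f. -/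

import Mathlib

/-!
Split `φ = r + ∑ₙ cₙ ζₙ` with `cₙ = ⟨φ, ζₙ⟩` and `r` the projection residual. Then
`⟨w - ŵ, φ⟩ = ⟨w - ŵ, r⟩ + ∑ₙ cₙ ⟨w - ŵ, ζₙ⟩`: Cauchy–Schwarz bounds the first term by
`(‖w‖₂ + ‖ŵ‖₂) ‖r‖₂`, and hypothesis (i) bounds the second by `ε₁ ∑ₙ |cₙ|`.
-/

open Finset

variable {ι κ : Type*} [Fintype ι] [Fintype κ]

lemma abs_sum_mul_le_sqrt_mul_sqrt (u r : ι → ℝ) :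
    |∑ i, u i * r i| ≤ √(∑ i, u i ^ 2) * √(∑ i, r i ^ 2) := by
  refine abs_le.2 ⟨?_, Real.sum_mul_le_sqrt_mul_sqrt _ u r⟩
  have h := Real.sum_mul_le_sqrt_mul_sqrt univ (fun i => -u i) r
  simp only [neg_mul, sum_neg_distrib, neg_sq] at h
  linarith

lemma abs_sum_sub_mul_le (u v r : ι → ℝ) :
    |∑ i, (u i - v i) * r i| ≤ (√(∑ i, u i ^ 2) + √(∑ i, v i ^ 2)) * √(∑ i, r i ^ 2) := by
  calc |∑ i, (u i - v i) * r i| = |∑ i, u i * r i - ∑ i, v i * r i| := by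
        simp only [sub_mul, sum_sub_distrib]
    _ ≤ |∑ i, u i * r i| + |∑ i, v i * r i| := abs_sub _ _
    _ ≤ √(∑ i, u i ^ 2) * √(∑ i, r i ^ 2) + √(∑ i, v i ^ 2) * √(∑ i, r i ^ 2) :=
        add_le_add (abs_sum_mul_le_sqrt_mul_sqrt u r) (abs_sum_mul_le_sqrt_mul_sqrt v r)
    _ = _ := (add_mul _ _ _).symm

lemma abs_sum_mul_le_mul_sum_abs {c a : κ → ℝ} {ε : ℝ} (ha : ∀ n, |a n| ≤ ε) :
    |∑ n, c n * a n| ≤ ε * ∑ n, |c n| := by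
  calc |∑ n, c n * a n| ≤ ∑ n, |c n| * |a n| := by
        simpa only [abs_mul] using abs_sum_le_sum_abs (fun n => c n * a n) univ
    _ ≤ ∑ n, |c n| * ε := by gcongr with n; exact ha n
    _ = ε * ∑ n, |c n| := by rw [← sum_mul, mul_comm]

lemma sum_mul_eq_sum_mul_sub_add_sum_mul_sum (v φ : ι → ℝ) (c : κ → ℝ) (ζ : κ → ι → ℝ) :
    ∑ i, v i * φ i =
      ∑ i, v i * (φ i - ∑ n, c n * ζ n i) + ∑ n, c n * ∑ i, v i * ζ n i := by
  simp only [mul_sub, sum_sub_distrib, mul_sum]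
  rw [sum_comm (f := fun i n => v i * (c n * ζ n i))]
  simp only [mul_left_comm]
  ring

theorem stmt_13_general (N R : ℕ) (ζ : Fin R → Fin N → ℝ)
    (w w' : Fin N → ℝ)
    (ε₁ σ S_f : ℝ) (hε₁ : 0 ≤ ε₁)
    (φ : Fin N → ℝ)
    (hconstr : ∀ n, |∑ i, (w i - w' i) * ζ n i| ≤ ε₁)
    (hproj : Real.sqrt (∑ i, (φ i - ∑ n, (∑ j, φ j * ζ n j) * ζ n i) ^ 2) ≤ σ)
    (hSf : ∑ n, |∑ j, φ j * ζ n j| ≤ S_f) :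
    |∑ i, w i * φ i - ∑ i, w' i * φ i| ≤
      (Real.sqrt (∑ i, w i ^ 2) + Real.sqrt (∑ i, w' i ^ 2)) * σ + ε₁ * S_f := by
  rw [← sum_sub_distrib]
  simp only [← sub_mul]
  rw [sum_mul_eq_sum_mul_sub_add_sum_mul_sum _ φ (fun n => ∑ j, φ j * ζ n j) ζ]
  refine (abs_add_le _ _).trans (add_le_add ?_ ?_)
  · exact (abs_sum_sub_mul_le w w' _).trans
      (mul_le_mul_of_nonneg_left hproj (by positivity))
  · exact (abs_sum_mul_le_mul_sum_abs hconstr).trans (mul_le_mul_of_nonneg_left hSf hε₁)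

theorem stmt_13 (N R : ℕ) (ζ : Fin R → Fin N → ℝ)
    (hζ : ∀ n m, ∑ i, ζ n i * ζ m i = if n = m then (1 : ℝ) else 0)
    (w w' : Fin N → ℝ) (Ω : ℝ)
    (hw : ∀ i, 0 ≤ w i) (hw' : ∀ i, 0 ≤ w' i)
    (hwsum : ∑ i, w i = Ω) (hw'sum : ∑ i, w' i ≤ Ω)
    (ε₁ σ S_f : ℝ) (hε₁ : 0 ≤ ε₁)
    (φ : Fin N → ℝ)
    (hconstr : ∀ n, |∑ i, (w i - w' i) * ζ n i| ≤ ε₁)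
    (hproj : Real.sqrt (∑ i, (φ i - ∑ n, (∑ j, φ j * ζ n j) * ζ n i) ^ 2) ≤ σ)
    (hSf : ∑ n, |∑ j, φ j * ζ n j| ≤ S_f) :
    |∑ i, w i * φ i - ∑ i, w' i * φ i| ≤
      (Real.sqrt (∑ i, w i ^ 2) + Real.sqrt (∑ i, w' i ^ 2)) * σ + ε₁ * S_f :=
  stmt_13_general N R ζ w w' ε₁ σ S_f hε₁ φ hconstr hproj hSf
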